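/- arXiv:1912.05370 — 4 statements merged into one kernel-verified Lean document; each statement's English description precedes it below -/
import Mathlib

section
/- R₀ = 1 if and only if J₀ = 1, where R₀ = (V₀ + sqrt(V₀² + 4H₀))/2 and J₀ = H₀/(1 - V₀) (equivalently J₀ = β_pv β_vp P* V* / ((m_i - m_h)P* + γ) α), under the assumption (m_i - m_h)P* + γ > 0. More precisely, R₀ = 1 is equivalent to H₀ = 1 - V₀. -/
/-- The larger root of `x ^ 2 = V x + H` is `1` exactly when `1` is a root; `V < 2` rules out `1` being the smaller one. -/
theorem half_add_sqrt_sq_add_four_mul_eq_one_iff {V H : ℝ} (hV : V < 2) :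
    (V + √(V ^ 2 + 4 * H)) / 2 = 1 ↔ H = 1 - V := by
  have hsqrt : (V + √(V ^ 2 + 4 * H)) / 2 = 1 ↔ √(V ^ 2 + 4 * H) = 2 - V := by
    constructor <;> intro h <;> linarith
  rw [hsqrt, Real.sqrt_eq_iff_mul_self_eq_of_pos (by linarith)]
  constructor <;> intro h <;> nlinarith

theorem div_add_eq_one_sub_div_add_iff {c r K : ℝ} (hc : c ≠ 0) (hcr : c + r ≠ 0) :
    K / (c + r) = 1 - r / (c + r) ↔ K / c = 1 := by
  rw [one_sub_div hcr, add_sub_cancel_right, div_left_inj' hcr, div_eq_one_iff_eq hc]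

theorem stmt1_general (c r K : ℝ) (hc : c > 0) (hr : r > 0)
    (V0 H0 R0 J0 : ℝ)
    (hV0 : V0 = r / (c + r)) (hH0 : H0 = K / (c + r))
    (hR0 : R0 = (V0 + Real.sqrt (V0 ^ 2 + 4 * H0)) / 2)
    (hJ0 : J0 = K / c) :
    (R0 = 1 ↔ J0 = 1) ∧ (R0 = 1 ↔ H0 = 1 - V0) := by
  have hcr : 0 < c + r := by linarith
  have hV0_lt : V0 < 2 := by
    rw [hV0, div_lt_iff₀ hcr]; linarith
  have hR0_iff : R0 = 1 ↔ H0 = 1 - V0 := by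
    rw [hR0]; exact half_add_sqrt_sq_add_four_mul_eq_one_iff hV0_lt
  have hJ0_iff : H0 = 1 - V0 ↔ J0 = 1 := by
    rw [hH0, hV0, hJ0]; exact div_add_eq_one_sub_div_add_iff hc.ne' hcr.ne'
  exact ⟨hR0_iff.trans hJ0_iff, hR0_iff⟩

theorem stmt1 (c r K : ℝ) (hc : c > 0) (hr : r > 0) (hK : K > 0)
    (V0 H0 R0 J0 : ℝ)
    (hV0 : V0 = r / (c + r)) (hH0 : H0 = K / (c + r))
    (hR0 : R0 = (V0 + Real.sqrt (V0 ^ 2 + 4 * H0)) / 2)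
    (hJ0 : J0 = K / c) :
    (R0 = 1 ↔ J0 = 1) ∧ (R0 = 1 ↔ H0 = 1 - V0) :=
  stmt1_general c r K hc hr V0 H0 R0 J0 hV0 hH0 hR0 hJ0
end

section
/- For any solution of the total biomass equation dP/dt = (r_p(V) − k_p)P − (m_h H_p + m_i I_p)P − γ I_p with nonnegative components, P satisfies the differential inequality dP/dt ≤ (r_p(0) − k_p)P − m_h P², and hence limsup_{t→∞} P(t) ≤ (r_p(0) − k_p)/m_h, assuming r_p(0) > k_p and m_i ≥ m_h. -/
/-!
Since `r_p` is nonincreasing and `V ≥ 0`, the growth term is at most `(r - k_p) P`; since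
`m_i ≥ m_h` and `H_p, I_p ≥ 0`, the loss terms are at least `m_h P²`. So `P` is a subsolution of
the logistic equation with capacity `K = (r - k_p) / m_h`: above `K + ε` it decreases at a rate
bounded away from zero, hence it falls below `K + ε` in finite time, and the level `K + ε` cannot
be crossed upwards afterwards.
-/

open Filter Set

theorem exists_le_of_deriv_le_neg {f f' : ℝ → ℝ} {t₀ L c : ℝ} (hc : 0 < c)
    (hf : ∀ t ≥ t₀, HasDerivAt f (f' t) t) (hf' : ∀ t ≥ t₀, L ≤ f t → f' t ≤ -c) :
    ∃ T ≥ t₀, f T ≤ L := by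
  by_contra! habove
  have hlinear : ∀ t ∈ Icc t₀ (t₀ + max 0 ((f t₀ - L) / c)), f t ≤ f t₀ - c * (t - t₀) :=
    image_le_of_deriv_right_le_deriv_boundary
      (fun x hx => (hf x hx.1).continuousAt.continuousWithinAt)
      (fun x hx => (hf x hx.1).hasDerivWithinAt) (by simp)
      (by fun_prop) (fun x _ => ((hasDerivAt_id x).sub_const t₀).const_mul c |>.const_sub _
        |>.hasDerivWithinAt |>.congr_deriv (by ring))
      (fun x hx => hf' x hx.1 (habove x hx.1).le)
  set T := t₀ + max 0 ((f t₀ - L) / c)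
  have hT : t₀ ≤ T := le_add_of_nonneg_right (le_max_left _ _)
  have hdrop : c * ((f t₀ - L) / c) ≤ c * (T - t₀) := by
    gcongr; simp [T]
  rw [mul_div_cancel₀ _ hc.ne'] at hdrop
  linarith [hlinear T ⟨hT, le_rfl⟩, habove T hT]

theorem le_of_deriv_neg_of_eq {f f' : ℝ → ℝ} {T L : ℝ}
    (hf : ∀ t ≥ T, HasDerivAt f (f' t) t) (hT : f T ≤ L) (hf' : ∀ t ≥ T, f t = L → f' t < 0) :
    ∀ t ≥ T, f t ≤ L := fun t ht =>
  image_le_of_deriv_right_lt_deriv_boundary (b := t)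
    (fun x hx => (hf x hx.1).continuousAt.continuousWithinAt)
    (fun x hx => (hf x hx.1).hasDerivWithinAt) hT (fun _ => hasDerivAt_const _ L)
    (fun x hx => hf' x hx.1) ⟨ht, le_rfl⟩

theorem eventually_le_of_deriv_le_neg {f f' : ℝ → ℝ} {t₀ L c : ℝ} (hc : 0 < c)
    (hf : ∀ t ≥ t₀, HasDerivAt f (f' t) t) (hf' : ∀ t ≥ t₀, L ≤ f t → f' t ≤ -c) :
    ∀ᶠ t in atTop, f t ≤ L := by
  obtain ⟨T, hT, hfT⟩ := exists_le_of_deriv_le_neg hc hf hf'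
  refine eventually_atTop.2 ⟨T, le_of_deriv_neg_of_eq (fun t ht => hf t (hT.trans ht)) hfT ?_⟩
  intro t ht heq
  linarith [hf' t (hT.trans ht) heq.ge]

theorem limsup_le_of_deriv_le_logistic {f f' : ℝ → ℝ} {t₀ a b : ℝ} (ha : 0 ≤ a) (hb : 0 < b)
    (hf : ∀ t ≥ t₀, HasDerivAt f (f' t) t) (hf_nonneg : ∀ t ≥ t₀, 0 ≤ f t)
    (hf' : ∀ t ≥ t₀, f' t ≤ a * f t - b * f t ^ 2) :
    limsup f atTop ≤ a / b := by
  have hcobdd : IsCoboundedUnder (· ≤ ·) atTop f :=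
    isCoboundedUnder_le_of_eventually_le atTop (eventually_atTop.2 ⟨t₀, hf_nonneg⟩)
  refine le_of_forall_pos_le_add fun ε hε => limsup_le_of_le hcobdd ?_
  have hL : 0 < a / b + ε := by positivity
  -- Above the level `a / b + ε` we have `a f - b f² = b f (a / b - f) ≤ -b ε (a / b + ε)`.
  refine eventually_le_of_deriv_le_neg (c := b * ε * (a / b + ε)) (by positivity) hf
    fun t ht hLt => (hf' t ht).trans ?_
  have hgap : (a / b + ε) * ε ≤ f t * (f t - a / b) :=
    mul_le_mul hLt (by linarith) hε.le (hL.le.trans hLt)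
  calc a * f t - b * f t ^ 2 = -(b * (f t * (f t - a / b))) := by field_simp; ring
    _ ≤ -(b * ε * (a / b + ε)) := by linarith [mul_le_mul_of_nonneg_left hgap hb.le]

theorem biomass_rhs_le_logistic {r rV kp mh mi γ H I : ℝ} (hrV : rV ≤ r) (hmi : mh ≤ mi)
    (hγ : 0 ≤ γ) (hH : 0 ≤ H) (hI : 0 ≤ I) :
    (rV - kp) * (H + I) - (mh * H + mi * I) * (H + I) - γ * I
      ≤ (r - kp) * (H + I) - mh * (H + I) ^ 2 := by
  have hP : 0 ≤ H + I := add_nonneg hH hI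
  nlinarith [mul_le_mul_of_nonneg_right hrV hP, mul_nonneg (mul_nonneg (sub_nonneg.2 hmi) hI) hP,
    mul_nonneg hγ hI]

theorem stmt4_general (rp : ℝ → ℝ) (r kp mh mi γ : ℝ)
    (hrp_anti : AntitoneOn rp (Set.Ici 0)) (hrp0 : rp 0 = r)
    (hr : r > kp) (hmh : mh > 0) (hmi : mi ≥ mh) (hγ : γ ≥ 0)
    (Hp Ip V P : ℝ → ℝ)
    (hP : ∀ t, P t = Hp t + Ip t)
    (hHp : ∀ t ≥ (0:ℝ), 0 ≤ Hp t) (hIp : ∀ t ≥ (0:ℝ), 0 ≤ Ip t)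
    (hV : ∀ t ≥ (0:ℝ), 0 ≤ V t)
    (hode : ∀ t ≥ (0:ℝ), HasDerivAt P
      ((rp (V t) - kp) * P t - (mh * Hp t + mi * Ip t) * P t - γ * Ip t) t) :
    (∀ t ≥ (0:ℝ), deriv P t ≤ (r - kp) * P t - mh * (P t) ^ 2) ∧
    Filter.limsup P Filter.atTop ≤ (r - kp) / mh := by
  have hderiv : ∀ t ≥ (0:ℝ), deriv P t ≤ (r - kp) * P t - mh * (P t) ^ 2 := by
    intro t ht
    have hrV : rp (V t) ≤ r := hrp0 ▸ hrp_anti self_mem_Ici (hV t ht) (hV t ht)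
    rw [(hode t ht).deriv, hP t]
    exact biomass_rhs_le_logistic hrV hmi hγ (hHp t ht) (hIp t ht)
  refine ⟨hderiv, limsup_le_of_deriv_le_logistic (sub_nonneg.2 hr.le) hmh
    (fun t ht => (hode t ht).differentiableAt.hasDerivAt) (fun t ht => ?_) hderiv⟩
  rw [hP t]
  exact add_nonneg (hHp t ht) (hIp t ht)

theorem stmt4 (rp : ℝ → ℝ) (r kp mh mi γ : ℝ)
    (hrp_anti : AntitoneOn rp (Set.Ici 0)) (hrp0 : rp 0 = r)
    (hr : r > kp) (hkp : kp > 0) (hmh : mh > 0) (hmi : mi ≥ mh) (hγ : γ ≥ 0)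
    (Hp Ip V P : ℝ → ℝ)
    (hP : ∀ t, P t = Hp t + Ip t)
    (hHp : ∀ t ≥ (0:ℝ), 0 ≤ Hp t) (hIp : ∀ t ≥ (0:ℝ), 0 ≤ Ip t)
    (hV : ∀ t ≥ (0:ℝ), 0 ≤ V t)
    (hode : ∀ t ≥ (0:ℝ), HasDerivAt P
      ((rp (V t) - kp) * P t - (mh * Hp t + mi * Ip t) * P t - γ * Ip t) t) :
    (∀ t ≥ (0:ℝ), deriv P t ≤ (r - kp) * P t - mh * (P t) ^ 2) ∧
    Filter.limsup P Filter.atTop ≤ (r - kp) / mh :=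
  stmt4_general rp r kp mh mi γ hrp_anti hrp0 hr hmh hmi hγ Hp Ip V P hP hHp hIp hV hode
end

section
/- Routh–Hurwitz for cubics: all roots of x³ + a₂x² + a₁x + a₀ ∈ ℝ[x] have negative real part if and only if a₂ > 0, a₀ > 0, and a₁a₂ > a₀. -/
lemma cubic_real_root_aux (a₀ a₁ a₂ : ℝ) : ∃ r : ℝ, r^3 + a₂*r^2 + a₁*r + a₀ = 0 := by
  set f : ℝ → ℝ := fun x => x^3 + a₂*x^2 + a₁*x + a₀ with hf
  set M : ℝ := 1 + |a₂| + |a₁| + |a₀| with hM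
  have hn2 := abs_nonneg a₂; have hn1 := abs_nonneg a₁; have hn0 := abs_nonneg a₀
  have hM1 : 1 ≤ M := by simp only [hM]; linarith
  have hcont : ContinuousOn f (Set.Icc (-M) M) := by fun_prop
  have h2 : |a₂| ≤ M - 1 := by simp only [hM]; linarith
  have h1 : |a₁| ≤ M - 1 := by simp only [hM]; linarith
  have h0 : |a₀| ≤ M - 1 := by simp only [hM]; linarith
  have hfM : 0 ≤ f M := by
    have := abs_le.mp h2; have := abs_le.mp h1; have := abs_le.mp h0
    simp only [hf]; nlinarith [sq_nonneg M, sq_nonneg (M-1)]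
  have hfmM : f (-M) ≤ 0 := by
    have := abs_le.mp h2; have := abs_le.mp h1; have := abs_le.mp h0
    simp only [hf]; nlinarith [sq_nonneg M, sq_nonneg (M-1)]
  obtain ⟨r, _, hr⟩ := intermediate_value_Icc (by linarith : -M ≤ M) hcont ⟨hfmM, hfM⟩
  exact ⟨r, hr⟩

theorem stmt13 (a₀ a₁ a₂ : ℝ) :
    (∀ z : ℂ, z ^ 3 + (a₂ : ℂ) * z ^ 2 + (a₁ : ℂ) * z + (a₀ : ℂ) = 0 → z.re < 0) ↔
      (a₂ > 0 ∧ a₀ > 0 ∧ a₁ * a₂ > a₀) := by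
  constructor
  · intro h
    obtain ⟨r, hr⟩ := cubic_real_root_aux a₀ a₁ a₂
    have hrneg : r < 0 := by
      have := h r (by exact_mod_cast congrArg (Complex.ofReal) hr)
      simpa using this
    set b : ℝ := a₂ + r with hbdef
    set c : ℝ := r^2 + a₂*r + a₁ with hcdef
    have hA2 : a₂ = b - r := by simp [hbdef]
    have hA1 : a₁ = c - r*b := by simp [hcdef, hbdef]; ring
    have hA0 : a₀ = -r*c := by simp only [hcdef]; linear_combination hr
    have hroot : ∀ w : ℂ, w^2 + (b:ℂ)*w + (c:ℂ) = 0 → w.re < 0 := by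
      intro w hw
      apply h
      have e2 : (a₂:ℂ) = (b:ℂ) - (r:ℂ) := by exact_mod_cast congrArg Complex.ofReal hA2
      have e1 : (a₁:ℂ) = (c:ℂ) - (r:ℂ)*(b:ℂ) := by exact_mod_cast congrArg Complex.ofReal hA1
      have e0 : (a₀:ℂ) = -(r:ℂ)*(c:ℂ) := by exact_mod_cast congrArg Complex.ofReal hA0
      calc w ^ 3 + (a₂:ℂ)*w^2 + (a₁:ℂ)*w + (a₀:ℂ)
          = (w - (r:ℂ)) * (w^2 + (b:ℂ)*w + (c:ℂ)) := by
            rw [e2, e1, e0]; ring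
        _ = 0 := by rw [hw, mul_zero]
    have hbc : 0 < b ∧ 0 < c := by
      rcases le_or_gt (b^2 - 4*c) 0 with hd | hd
      · rcases eq_or_lt_of_le hd with heq | hlt
        · have heqc : (b:ℂ)^2 - 4*(c:ℂ) = 0 := by exact_mod_cast congrArg Complex.ofReal heq
          have hu : ((-b/2 : ℝ) : ℂ)^2 + (b:ℂ)*((-b/2:ℝ):ℂ) + (c:ℂ) = 0 := by
            push_cast; linear_combination (-1/4 : ℂ) * heqc
          have := hroot _ hu
          simp at this
          constructor
          · linarith
          · nlinarith
        · set t : ℝ := Real.sqrt (4*c - b^2) / 2 with htdef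
          have ht : t^2 = c - b^2/4 := by
            simp only [htdef]
            rw [div_pow, Real.sq_sqrt (by linarith)]
            ring
          have htc : (c:ℂ) - (b:ℂ)^2/4 - (t:ℂ)^2 = 0 := by
            have h' : ((t:ℂ))^2 = (c:ℂ) - (b:ℂ)^2/4 := by
              exact_mod_cast congrArg Complex.ofReal ht
            linear_combination -h'
          set w : ℂ := (↑(-b/2 : ℝ)) + (t:ℂ) * Complex.I with hwdef
          have hw : w^2 + (b:ℂ)*w + (c:ℂ) = 0 := by
            simp only [hwdef]; push_cast
            linear_combination (t:ℂ)^2 * Complex.I_sq + htc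
          have hre : w.re = -b/2 := by simp [hwdef]
          have := hroot w hw
          rw [hre] at this
          constructor
          · linarith
          · nlinarith
      · set s : ℝ := Real.sqrt (b^2 - 4*c) with hsdef
        have hs : s^2 = b^2 - 4*c := Real.sq_sqrt (by linarith)
        have hu : ((((-b+s)/2 : ℝ)) : ℂ)^2 + (b:ℂ)*(((-b+s)/2 : ℝ):ℂ) + (c:ℂ) = 0 := by
          push_cast
          have h' : ((s:ℂ))^2 = (b:ℂ)^2 - 4*(c:ℂ) := by
            exact_mod_cast congrArg Complex.ofReal hs
          linear_combination h'/4
        have hv : ((((-b-s)/2 : ℝ)) : ℂ)^2 + (b:ℂ)*(((-b-s)/2 : ℝ):ℂ) + (c:ℂ) = 0 := by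
          push_cast
          have h' : ((s:ℂ))^2 = (b:ℂ)^2 - 4*(c:ℂ) := by
            exact_mod_cast congrArg Complex.ofReal hs
          linear_combination h'/4
        have hu' := hroot _ hu
        have hv' := hroot _ hv
        simp at hu' hv'
        constructor
        · linarith
        · nlinarith [mul_pos (by linarith : (0:ℝ) < (b-s)/2) (by linarith : (0:ℝ) < (b+s)/2)]
    obtain ⟨hb, hc⟩ := hbc
    refine ⟨by linarith [hA2], by nlinarith [hA0], ?_⟩
    have key : a₁*a₂ - a₀ = b*(r^2 - b*r + c) := by rw [hA2, hA1, hA0]; ring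
    nlinarith [mul_pos hb (show 0 < r^2 - b*r + c by nlinarith [sq_nonneg r])]
  · rintro ⟨h2, h0, h10⟩ z hz
    have ha1 : 0 < a₁ := by nlinarith
    by_contra hs
    push_neg at hs
    rw [Complex.ext_iff] at hz
    obtain ⟨hre, him⟩ := hz
    simp [pow_succ, Complex.mul_re, Complex.mul_im] at hre him
    rcases eq_or_ne z.im 0 with ht0 | ht0
    · rw [ht0] at hre
      nlinarith [pow_nonneg hs 3, mul_nonneg (mul_nonneg h2.le hs) hs, mul_nonneg ha1.le hs]
    · have hb : 3*z.re^2 - z.im^2 + 2*a₂*z.re + a₁ = 0 := by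
        have h' : z.im * (3*z.re^2 - z.im^2 + 2*a₂*z.re + a₁) = 0 := by linear_combination him
        rcases mul_eq_zero.mp h' with h | h
        · exact absurd h ht0
        · exact h
      have key : 8*z.re^3 + 8*a₂*z.re^2 + 2*(a₁+a₂^2)*z.re = a₀ - a₁*a₂ := by
        linear_combination -hre + (3*z.re+a₂)*hb
      nlinarith [pow_nonneg hs 3, mul_nonneg (mul_nonneg h2.le hs) hs, mul_nonneg ha1.le hs,
        mul_nonneg (mul_nonneg h2.le h2.le) hs]
end

section
/- If 0 < φ < (r − (γ + k_p))μ₂/((γ + k_p)(α − μ₁)) with r > γ + k_p and α > μ₁, then A := (γ + k_p)(μ₂ + φ(α − μ₁)) − rμ₂ < 0, and consequently the quadratic (B + δ m_i φ α)X² + (B + A + (γ+k_p)φαδ)X + A with B = m_i(μ₂ + φ(α − μ₁)) > 0 and δ ≥ 0 has a unique strictly positive root X = (−(B + A + (γ+k_p)φαδ) + √Δ)/(2(B + δ m_i φ α)) where Δ = (B + A + (γ+k_p)φαδ)² − 4A(B + δ m_i φ α) > 0. -/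
theorem stmt15 (r γ kp μ₁ μ₂ α mi φ δ : ℝ)
    (hr : r > γ + kp) (hγkp : γ + kp > 0) (hα : α > μ₁) (hμ₁ : μ₁ > 0)
    (hμ₂ : μ₂ > 0) (hmi : mi > 0) (hδ : δ ≥ 0)
    (hφ1 : 0 < φ) (hφ2 : φ < (r - (γ + kp)) * μ₂ / ((γ + kp) * (α - μ₁)))
    (A B Δ X : ℝ)
    (hA : A = (γ + kp) * (μ₂ + φ * (α - μ₁)) - r * μ₂)
    (hB : B = mi * (μ₂ + φ * (α - μ₁)))
    (hΔ : Δ = (B + A + (γ + kp) * φ * α * δ) ^ 2 - 4 * A * (B + δ * mi * φ * α))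
    (hX : X = (-(B + A + (γ + kp) * φ * α * δ) + Real.sqrt Δ) / (2 * (B + δ * mi * φ * α))) :
    A < 0 ∧ B > 0 ∧ Δ > 0 ∧ X > 0 ∧
    (B + δ * mi * φ * α) * X ^ 2 + (B + A + (γ + kp) * φ * α * δ) * X + A = 0 ∧
    ∀ Y : ℝ, Y > 0 →
      (B + δ * mi * φ * α) * Y ^ 2 + (B + A + (γ + kp) * φ * α * δ) * Y + A = 0 → Y = X := by
  have hαμ : α - μ₁ > 0 := by linarith
  have hden : (γ + kp) * (α - μ₁) > 0 := by positivity
  have hφ2' : φ * ((γ + kp) * (α - μ₁)) < (r - (γ + kp)) * μ₂ := by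
    rw [div_eq_mul_inv] at hφ2
    calc φ * ((γ + kp) * (α - μ₁)) < (r - (γ + kp)) * μ₂ * ((γ + kp) * (α - μ₁))⁻¹ * ((γ + kp) * (α - μ₁)) := by
          exact mul_lt_mul_of_pos_right hφ2 hden
      _ = (r - (γ + kp)) * μ₂ := by field_simp
  have hApos : A < 0 := by nlinarith [hφ2']
  have hBpos : B > 0 := by
    rw [hB]; positivity
  set a := B + δ * mi * φ * α with ha_def
  set b := B + A + (γ + kp) * φ * α * δ with hb_def
  have ha : a > 0 := by
    have : δ * mi * φ * α ≥ 0 :=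
      mul_nonneg (mul_nonneg (mul_nonneg hδ hmi.le) hφ1.le) (by linarith : (0:ℝ) ≤ α)
    linarith
  have hΔpos : Δ > 0 := by
    rw [hΔ]
    nlinarith [sq_nonneg b, mul_pos ha (neg_pos.mpr hApos)]
  clear_value a b
  clear ha_def hb_def hA hB hφ2 hφ2' hden hαμ
  set s := Real.sqrt Δ with hs_def
  have hs2 : s ^ 2 = Δ := Real.sq_sqrt (le_of_lt hΔpos)
  have hsb : |b| < s := by
    have : Real.sqrt (b ^ 2) < Real.sqrt Δ := by
      apply Real.sqrt_lt_sqrt (sq_nonneg b)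
      rw [hΔ]; nlinarith [mul_pos ha (neg_pos.mpr hApos)]
    rwa [Real.sqrt_sq_eq_abs] at this
  have hbs : -b < s := lt_of_le_of_lt (neg_le_abs b) hsb
  have hbs2 : b < s := lt_of_le_of_lt (le_abs_self b) hsb
  have hXpos : X > 0 := by
    rw [hX]
    apply div_pos (by linarith) (by linarith)
  have hroot : a * X ^ 2 + b * X + A = 0 := by
    have h2 : (2 * a) * X = -b + s := by
      rw [hX]; field_simp
    have hΔ' : s ^ 2 = b ^ 2 - 4 * A * a := by rw [hs2, hΔ]
    have hs_eq : s = 2 * a * X + b := by linarith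
    rw [hs_eq] at hΔ'
    have h4 : 4 * a * (a * X ^ 2 + b * X + A) = 0 := by linear_combination hΔ'
    have h4a : (4 : ℝ) * a ≠ 0 := by positivity
    exact (mul_eq_zero.mp h4).resolve_left h4a
  refine ⟨hApos, hBpos, hΔpos, hXpos, hroot, ?_⟩
  intro Y hY hYroot
  by_contra hne
  have hfac : (Y - X) * (a * (Y + X) + b) = 0 := by linear_combination hYroot - hroot
  have h2 : a * (Y + X) + b = 0 := by
    rcases mul_eq_zero.mp hfac with h | h
    · exact absurd (by linarith) hne
    · exact h
  have h2X : (2 * a) * X = -b + s := by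
    rw [hX]; field_simp
  have hY2 : 2 * a * Y = -b - s := by linarith
  have := mul_pos ha hY
  linarith
end
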